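/- Every strongly rigid metric space is not shifted: if X is a metric space such that for all x, y, u, v ∈ X the conditions dist(x, y) = dist(u, v) and x ≠ y imply {x, y} = {u, v}, then every isometric self-embedding of X is surjective. -/

import Mathlib

universe u v w

open Function Set

/-- `f` is an isometric (distance-preserving) embedding of metric spaces. -/
def IsIsomEmb {X : Type u} {Y : Type v} [MetricSpace X] [MetricSpace Y] (f : X → Y) : Prop :=
  ∀ a b : X, dist (f a) (f b) = dist a b

/-- `X` embeds isometrically into `Y`. -/
def IsomEmbeds (X : Type u) (Y : Type v) [MetricSpace X] [MetricSpace Y] : Prop :=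
  ∃ f : X → Y, IsIsomEmb f

/-- `X` and `Y` are isometric: there is a surjective isometric embedding of `X` onto `Y`. -/
def IsIsometricTo (X : Type u) (Y : Type v) [MetricSpace X] [MetricSpace Y] : Prop :=
  ∃ f : X → Y, IsIsomEmb f ∧ Surjective f

/-- `X` is not shifted: every isometric self-embedding of `X` is surjective. -/
def NotShifted (X : Type u) [MetricSpace X] : Prop :=
  ∀ f : X → X, IsIsomEmb f → Surjective f

/-- `Y` is universal for the family `M` of metric spaces. -/
def UnivFor {ι : Type w} (M : ι → Type u) [∀ i, MetricSpace (M i)]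
    (Y : Type v) [MetricSpace Y] : Prop :=
  ∀ i, IsomEmbeds (M i) Y

/-- `Y` is minimal universal for the family `M` of metric spaces: `Y` is `M`-universal and
every subset of `Y` (with the induced metric) which is `M`-universal equals `Y`. -/
def MinUnivFor {ι : Type w} (M : ι → Type u) [∀ i, MetricSpace (M i)]
    (Y : Type v) [MetricSpace Y] : Prop :=
  UnivFor M Y ∧ ∀ S : Set Y, UnivFor M ↥S → S = Set.univ

theorem statement6 {X : Type u} [MetricSpace X]
    (hsr : ∀ x y u v : X, dist x y = dist u v → x ≠ y → ({x, y} : Set X) = {u, v}) :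
    NotShifted X := by
  intro f hf a
  by_cases hfix : f a = a
  · exact ⟨a, hfix⟩
  -- A point not fixed by `f` is swapped with its image: rigidity of the pair `{a, f a}`.
  have hpair : ({a, f a} : Set X) = {f a, f (f a)} :=
    hsr a (f a) (f a) (f (f a)) (hf a (f a)).symm (Ne.symm hfix)
  have ha : a ∈ ({f a, f (f a)} : Set X) := hpair ▸ mem_insert a _
  rcases ha with ha | ha
  · exact absurd ha.symm hfix
  · exact ⟨f a, ha.symm⟩
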